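/- Let A : X ⇒ X and B : X ⇒ X be maximally monotone operators. Then ri(dom A − dom B) ∩ ri(ran A + ran B) ≠ ∅, where dom A − dom B is the Minkowski difference and ran A + ran B is the Minkowski sum. -/

import Mathlib

open Set Pointwise

/-- Domain of a set-valued operator. -/
def svDom {X : Type*} (A : X → Set X) : Set X := {x | (A x).Nonempty}

/-- Range of a set-valued operator. -/
def svRan {X : Type*} (A : X → Set X) : Set X := ⋃ x, A x

/-- Monotonicity of a set-valued operator. -/
def IsMonotoneOp {X : Type*} [NormedAddCommGroup X] [InnerProductSpace ℝ X]
    (A : X → Set X) : Prop :=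
  ∀ ⦃x u y v : X⦄, u ∈ A x → v ∈ A y → 0 ≤ (inner ℝ (x - y) (u - v) : ℝ)

/-- Maximal monotonicity of a set-valued operator. -/
def IsMaxMonotoneOp {X : Type*} [NormedAddCommGroup X] [InnerProductSpace ℝ X]
    (A : X → Set X) : Prop :=
  IsMonotoneOp A ∧
    ∀ x u : X, (∀ y v : X, v ∈ A y → 0 ≤ (inner ℝ (x - y) (u - v) : ℝ)) → u ∈ A x

/-- `A` is 3* monotone (rectangular): for every `x ∈ dom A` and `v ∈ ran A`, the set
`{⟪x - z, v - w⟫ : (z,w) ∈ gra A}` is bounded below. -/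
def Is3StarMonotoneOp {X : Type*} [NormedAddCommGroup X] [InnerProductSpace ℝ X]
    (A : X → Set X) : Prop :=
  ∀ x ∈ svDom A, ∀ v ∈ svRan A,
    BddBelow {r : ℝ | ∃ z w : X, w ∈ A z ∧ r = (inner ℝ (x - z) (v - w) : ℝ)}

/-- Two sets are nearly equal if they have the same closure and the same relative
(intrinsic) interior. -/
def NearEq {X : Type*} [NormedAddCommGroup X] [NormedSpace ℝ X] (C D : Set X) : Prop :=
  closure C = closure D ∧ intrinsicInterior ℝ C = intrinsicInterior ℝ D

/-- `J` is the resolvent of `A`: the single-valued, everywhere-defined map with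
`x - J x ∈ A (J x)` for all `x`. -/
def IsResolventOf {X : Type*} [NormedAddCommGroup X] (J : X → X) (A : X → Set X) : Prop :=
  ∀ x : X, x - J x ∈ A (J x)

/-- The Douglas–Rachford operator `T = Id - J_A + J_B ∘ (2 J_A - Id)` built from
the resolvents `J_A` and `J_B`. -/
noncomputable def drT {X : Type*} [NormedAddCommGroup X] [NormedSpace ℝ X]
    (JA JB : X → X) : X → X :=
  fun x => x - JA x + JB ((2 : ℝ) • JA x - x)

/-!
`dom A` is nearly convex: `ri (conv (dom A)) ⊆ dom A`, which follows from Minty's theorem by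
following the resolvent path `x + ε v = z`, `v ∈ A x`, as `ε → 0`. Applied to `A⁻¹`, so is
`ran A`. Hence `D = dom A - dom B` and `R = ran A + ran B` are nearly convex, with convex cores
`C ⊆ D ⊆ closure C` and `E ⊆ R ⊆ closure E`, and Minty's theorem for `B` gives `D - R = X`.
Pick `c ∈ ri C`, `e ∈ ri E` and write `e - c = d - r` with `d ∈ D`, `r ∈ R`. By the line segment
principle the point `(c + d) / 2 = (e + r) / 2` lies in `ri C ∩ ri E ⊆ ri D ∩ ri R`.
-/
open Filter Topology
open scoped RealInnerProductSpace

theorem closure_add_closure_subset {G : Type*} [TopologicalSpace G] [Add G] [ContinuousAdd G]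
    (s t : Set G) : closure s + closure t ⊆ closure (s + t) :=
  image2_subset_iff.2 fun _ ha _ hb =>
    map_mem_closure₂ continuous_add ha hb fun _ ha' _ hb' => add_mem_add ha' hb'

theorem closure_sub_closure_subset {G : Type*} [TopologicalSpace G] [Sub G] [ContinuousSub G]
    (s t : Set G) : closure s - closure t ⊆ closure (s - t) :=
  image2_subset_iff.2 fun _ ha _ hb =>
    map_mem_closure₂ continuous_sub ha hb fun _ ha' _ hb' => sub_mem_sub ha' hb'

section IntrinsicInterior

variable {X : Type*} [NormedAddCommGroup X] [NormedSpace ℝ X]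

theorem mem_intrinsicInterior_iff_dist {s : Set X} {x : X} :
    x ∈ intrinsicInterior ℝ s ↔
      x ∈ s ∧ ∃ ε > 0, ∀ y ∈ affineSpan ℝ s, dist y x < ε → y ∈ s := by
  constructor
  · rintro ⟨y, hy, rfl⟩
    obtain ⟨ε, hε, hball⟩ := Metric.mem_nhds_iff.1 (mem_interior_iff_mem_nhds.1 hy)
    exact ⟨mem_preimage.1 (interior_subset hy), ε, hε, fun z hz hzy => @hball ⟨z, hz⟩ hzy⟩
  · rintro ⟨hxs, ε, hε, hball⟩
    refine ⟨⟨x, subset_affineSpan ℝ s hxs⟩, ?_, rfl⟩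
    exact mem_interior_iff_mem_nhds.2 <| Metric.mem_nhds_iff.2 ⟨ε, hε, fun y hy => hball y y.2 hy⟩

theorem intrinsicInterior_mono_of_affineSpan_eq {s t : Set X} (hst : s ⊆ t)
    (hspan : affineSpan ℝ s = affineSpan ℝ t) :
    intrinsicInterior ℝ s ⊆ intrinsicInterior ℝ t := by
  intro x hx
  obtain ⟨hxs, ε, hε, hball⟩ := mem_intrinsicInterior_iff_dist.1 hx
  exact mem_intrinsicInterior_iff_dist.2
    ⟨hst hxs, ε, hε, fun y hy hyx => hst (hball y (hspan ▸ hy) hyx)⟩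

variable [FiniteDimensional ℝ X]

theorem closure_subset_affineSpan (s : Set X) : closure s ⊆ affineSpan ℝ s :=
  intrinsicClosure_eq_closure ℝ s ▸ intrinsicClosure_subset_affineSpan

theorem affineSpan_eq_of_subset_of_subset_closure {s t : Set X} (hst : s ⊆ t)
    (hts : t ⊆ closure s) : affineSpan ℝ s = affineSpan ℝ t :=
  le_antisymm (affineSpan_mono ℝ hst) (affineSpan_le.2 (hts.trans (closure_subset_affineSpan s)))

theorem Convex.combo_intrinsicInterior_closure_mem_intrinsicInterior {s : Set X}
    (hs : Convex ℝ s) {x y : X} (hx : x ∈ intrinsicInterior ℝ s) (hy : y ∈ closure s)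
    {a b : ℝ} (ha : 0 < a) (hb : 0 ≤ b) (hab : a + b = 1) :
    a • x + b • y ∈ intrinsicInterior ℝ s := by
  obtain ⟨hxs, ε, hε, hball⟩ := mem_intrinsicInterior_iff_dist.1 hx
  have hδ : 0 < a * ε / 2 := by positivity
  obtain ⟨y', hy's, hyy'⟩ := Metric.mem_closure_iff.1 hy _ hδ
  have hb1 : b ≤ 1 := by linarith
  -- `p` near `a • x + b • y` is `a • x' + b • y'` with `x'` near `x`
  have hnear : ∀ p ∈ affineSpan ℝ s, dist p (a • x + b • y) < a * ε / 2 → p ∈ s := by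
    intro p hp hpz
    set x' := AffineMap.lineMap y' p a⁻¹
    have hx'S : x' ∈ affineSpan ℝ s :=
      AffineMap.lineMap_mem _ (subset_affineSpan ℝ s hy's) hp
    have hx'x : x' - x = a⁻¹ • ((p - (a • x + b • y)) + b • (y - y')) := by
      simp only [x', AffineMap.lineMap_apply_module]
      match_scalars <;> field_simp <;> linarith
    have hdist : dist x' x < ε := calc
      dist x' x = a⁻¹ * ‖(p - (a • x + b • y)) + b • (y - y')‖ := by
        rw [dist_eq_norm, hx'x, norm_smul, Real.norm_of_nonneg (inv_nonneg.2 ha.le)]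
      _ ≤ a⁻¹ * (dist p (a • x + b • y) + 1 * dist y y') := by
        grw [norm_add_le, norm_smul, Real.norm_of_nonneg hb, hb1, dist_eq_norm, dist_eq_norm]
      _ < a⁻¹ * (a * ε / 2 + 1 * (a * ε / 2)) := by gcongr
      _ = ε := by field_simp; ring
    have hp : p = a • x' + b • y' := by
      simp only [x', AffineMap.lineMap_apply_module]
      match_scalars <;> field_simp; linarith
    exact hp ▸ hs (hball x' hx'S hdist) hy's ha.le hb hab
  have hzS : a • x + b • y ∈ affineSpan ℝ s := by
    have := AffineMap.lineMap_mem (Q := affineSpan ℝ s) a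
      (closure_subset_affineSpan s hy) (subset_affineSpan ℝ s hxs)
    rwa [AffineMap.lineMap_apply_module, ← hab, add_sub_cancel_left, add_comm] at this
  exact mem_intrinsicInterior_iff_dist.2
    ⟨hnear _ hzS (by rwa [dist_self]), _, hδ, hnear⟩

protected theorem Convex.intrinsicInterior {s : Set X} (hs : Convex ℝ s) :
    Convex ℝ (intrinsicInterior ℝ s) := by
  intro x hx y hy a b ha hb hab
  rcases ha.eq_or_lt with rfl | ha
  · rw [zero_add] at hab
    simpa [hab] using hy
  · exact hs.combo_intrinsicInterior_closure_mem_intrinsicInterior hx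
      (subset_closure (intrinsicInterior_subset hy)) ha hb hab

theorem Convex.subset_closure_intrinsicInterior {s : Set X} (hs : Convex ℝ s) :
    s ⊆ closure (intrinsicInterior ℝ s) := by
  intro x hx
  obtain ⟨c, hc⟩ := Set.Nonempty.intrinsicInterior hs ⟨x, hx⟩
  have hlim : Tendsto (fun t : ℝ => t • c + (1 - t) • x) (𝓝[>] 0) (𝓝 x) := by
    have hcont : Continuous fun t : ℝ => t • c + (1 - t) • x := by fun_prop
    exact (hcont.tendsto' 0 x (by simp)).mono_left nhdsWithin_le_nhds
  refine mem_closure_of_tendsto hlim ?_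
  filter_upwards [Ioo_mem_nhdsGT zero_lt_one] with t ht
  exact hs.combo_intrinsicInterior_closure_mem_intrinsicInterior hc (subset_closure hx)
    ht.1 (by linarith [ht.2]) (by ring)

end IntrinsicInterior

section NearlyConvex

variable {X : Type*} [NormedAddCommGroup X] [NormedSpace ℝ X]

def IsNearlyConvex (s : Set X) : Prop :=
  ∃ C : Set X, Convex ℝ C ∧ C ⊆ s ∧ s ⊆ closure C

theorem IsNearlyConvex.add {s t : Set X} (hs : IsNearlyConvex s) (ht : IsNearlyConvex t) :
    IsNearlyConvex (s + t) := by
  obtain ⟨C, hC, hCs, hsC⟩ := hs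
  obtain ⟨D, hD, hDt, htD⟩ := ht
  exact ⟨C + D, hC.add hD, add_subset_add hCs hDt,
    (add_subset_add hsC htD).trans (closure_add_closure_subset C D)⟩

theorem IsNearlyConvex.sub {s t : Set X} (hs : IsNearlyConvex s) (ht : IsNearlyConvex t) :
    IsNearlyConvex (s - t) := by
  obtain ⟨C, hC, hCs, hsC⟩ := hs
  obtain ⟨D, hD, hDt, htD⟩ := ht
  exact ⟨C - D, hC.sub hD, sub_subset_sub hCs hDt,
    (sub_subset_sub hsC htD).trans (closure_sub_closure_subset C D)⟩

variable [FiniteDimensional ℝ X]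

theorem IsNearlyConvex.exists_intrinsicInterior_subset {s : Set X} (hs : IsNearlyConvex s) :
    ∃ C : Set X, Convex ℝ C ∧ s ⊆ closure C ∧ intrinsicInterior ℝ C ⊆ intrinsicInterior ℝ s :=
  let ⟨C, hC, hCs, hsC⟩ := hs
  ⟨C, hC, hsC, intrinsicInterior_mono_of_affineSpan_eq hCs
    (affineSpan_eq_of_subset_of_subset_closure hCs hsC)⟩

theorem IsNearlyConvex.inter_intrinsicInterior_nonempty_of_sub_eq_univ {s t : Set X}
    (hs : IsNearlyConvex s) (ht : IsNearlyConvex t) (hst : s - t = univ) :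
    (intrinsicInterior ℝ s ∩ intrinsicInterior ℝ t).Nonempty := by
  obtain ⟨C, hC, hsC, hCs⟩ := hs.exists_intrinsicInterior_subset
  obtain ⟨D, hD, htD, hDt⟩ := ht.exists_intrinsicInterior_subset
  obtain ⟨x₀, hx₀, y₀, hy₀, -⟩ : (0 : X) ∈ s - t := hst ▸ mem_univ 0
  obtain ⟨c, hc⟩ := (closure_nonempty_iff.1 ⟨x₀, hsC hx₀⟩).intrinsicInterior hC
  obtain ⟨d, hd⟩ := (closure_nonempty_iff.1 ⟨y₀, htD hy₀⟩).intrinsicInterior hD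
  obtain ⟨x, hx, y, hy, hxy⟩ : d - c ∈ s - t := hst ▸ mem_univ _
  have hmid : (1 / 2 : ℝ) • c + (1 / 2 : ℝ) • x = (1 / 2 : ℝ) • d + (1 / 2 : ℝ) • y := by
    simp only at hxy
    rw [← smul_add, ← smul_add, show d = x - y + c by rw [hxy]; abel]
    abel_nf
  refine ⟨(1 / 2 : ℝ) • c + (1 / 2 : ℝ) • x, hCs ?_, hDt ?_⟩
  · exact hC.combo_intrinsicInterior_closure_mem_intrinsicInterior hc (hsC hx)
      one_half_pos one_half_pos.le (add_halves 1)
  · exact hmid ▸ hD.combo_intrinsicInterior_closure_mem_intrinsicInterior hd (htD hy)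
      one_half_pos one_half_pos.le (add_halves 1)

end NearlyConvex

section FiniteMonotone

variable {X : Type*} [NormedAddCommGroup X] [InnerProductSpace ℝ X]

theorem inner_sum_smul_sum_smul_le {ι : Type*} (t : Finset ι) {w : ι → ℝ} {y v : ι → X}
    (hw₀ : ∀ i ∈ t, 0 ≤ w i) (hw₁ : ∑ i ∈ t, w i = 1)
    (hmono : ∀ i ∈ t, ∀ j ∈ t, 0 ≤ ⟪y i - y j, v i - v j⟫) :
    ⟪∑ i ∈ t, w i • y i, ∑ i ∈ t, w i • v i⟫ ≤ ∑ i ∈ t, w i * ⟪y i, v i⟫ := by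
  have hpos : 0 ≤ ∑ i ∈ t, ∑ j ∈ t, w i * w j * ⟪y i - y j, v i - v j⟫ :=
    Finset.sum_nonneg fun i hi => Finset.sum_nonneg fun j hj =>
      mul_nonneg (mul_nonneg (hw₀ i hi) (hw₀ j hj)) (hmono i hi j hj)
  have hcross : ⟪∑ i ∈ t, w i • y i, ∑ j ∈ t, w j • v j⟫ =
      ∑ i ∈ t, ∑ j ∈ t, w i * w j * ⟪y i, v j⟫ := by
    rw [sum_inner]
    simp only [inner_sum, real_inner_smul_left, real_inner_smul_right]
    exact Finset.sum_congr rfl fun i _ => Finset.sum_congr rfl fun j _ => by ring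
  have hdiag : ∑ i ∈ t, ∑ j ∈ t, w i * w j * ⟪y i, v i⟫ = ∑ i ∈ t, w i * ⟪y i, v i⟫ :=
    Finset.sum_congr rfl fun i _ => by
      rw [← Finset.sum_mul, ← Finset.mul_sum, hw₁, mul_one]
  have hexpand : ∑ i ∈ t, ∑ j ∈ t, w i * w j * ⟪y i - y j, v i - v j⟫ =
      (∑ i ∈ t, ∑ j ∈ t, w i * w j * ⟪y i, v i⟫) + (∑ i ∈ t, ∑ j ∈ t, w j * w i * ⟪y j, v j⟫)
        - (∑ i ∈ t, ∑ j ∈ t, w i * w j * ⟪y i, v j⟫)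
        - (∑ i ∈ t, ∑ j ∈ t, w j * w i * ⟪y j, v i⟫) := by
    simp only [← Finset.sum_add_distrib, ← Finset.sum_sub_distrib]
    refine Finset.sum_congr rfl fun i _ => Finset.sum_congr rfl fun j _ => ?_
    simp only [inner_sub_left, inner_sub_right]
    ring
  rw [Finset.sum_comm (f := fun i j => w j * w i * ⟪y j, v j⟫), hdiag,
    Finset.sum_comm (f := fun i j => w j * w i * ⟪y j, v i⟫), ← hcross] at hexpand
  linarith

theorem sum_mul_inner_nonpos_of_sum_smul_eq_zero {κ : Type*} (s : Finset κ) {w : κ → ℝ}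
    (hw₀ : ∀ k ∈ s, 0 ≤ w k) (hw₁ : ∑ k ∈ s, w k = 1) {a u : κ → X}
    (hmono : ∀ k ∈ s, ∀ l ∈ s, 0 ≤ ⟪a k - a l, u k - u l⟫) {x z : X}
    (hx : ∑ k ∈ s, w k • ((2 : ℝ) • x - z + u k - a k) = 0) :
    ∑ k ∈ s, w k * ⟪x - a k, x - z + u k⟫ ≤ 0 := by
  set m := ∑ k ∈ s, w k • (a k - x)
  have hm : ∑ k ∈ s, w k • (x - z + u k) = m := by
    rw [← sub_eq_zero, ← Finset.sum_sub_distrib, ← hx]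
    exact Finset.sum_congr rfl fun k _ => by rw [← smul_sub]; congr 1; module
  have hle := inner_sum_smul_sum_smul_le s hw₀ hw₁ (y := fun k => a k - x)
    (v := fun k => x - z + u k) fun k hk l hl => by
      convert hmono k hk l hl using 2 <;> abel
  rw [hm, real_inner_self_eq_norm_sq] at hle
  have hneg : ∑ k ∈ s, w k * ⟪x - a k, x - z + u k⟫ =
      -∑ k ∈ s, w k * ⟪a k - x, x - z + u k⟫ := by
    rw [← Finset.sum_neg_distrib]
    exact Finset.sum_congr rfl fun k _ => by rw [← neg_sub, inner_neg_left, mul_neg]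
  rw [hneg]
  linarith [sq_nonneg ‖m‖]

theorem dist_mul_dist_sub_norm_le_inner (x a b : X) :
    dist x a * (dist x a - ‖a - b‖) ≤ ⟪x - a, x - b⟫ := by
  rw [show x - b = (x - a) + (a - b) by abel, inner_add_right, real_inner_self_eq_norm_sq,
    dist_eq_norm]
  nlinarith [neg_abs_le ⟪x - a, a - b⟫, abs_real_inner_le_norm (x - a) (a - b)]

variable [FiniteDimensional ℝ X]

theorem tendsto_inner_sub_sub_cocompact (a b : X) :
    Tendsto (fun x => ⟪x - a, x - b⟫) (cocompact X) atTop := by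
  refine tendsto_atTop_mono (fun x => dist_mul_dist_sub_norm_le_inner x a b) ?_
  exact (tendsto_dist_right_cocompact_atTop a).atTop_mul_atTop₀
    (tendsto_atTop_add_const_right _ _ (tendsto_dist_right_cocompact_atTop a))

/-- If `0` were not in the hull, a direction separating it from the active gradients would
decrease every active function, while the inactive ones stay below the maximum for short steps. -/
theorem zero_mem_convexHull_gradients_of_sup'_le {ι : Type*} {t : Finset ι} (ht : t.Nonempty)
    {f : ι → X → ℝ} {g : ι → X} {x₀ : X}
    (hf : ∀ i h, f i (x₀ + h) = f i x₀ + ⟪h, g i⟫ + ‖h‖ ^ 2)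
    (hmin : ∀ x, t.sup' ht (f · x₀) ≤ t.sup' ht (f · x)) :
    (0 : X) ∈ convexHull ℝ (g '' {i | i ∈ t ∧ f i x₀ = t.sup' ht (f · x₀)}) := by
  set F := t.sup' ht (f · x₀)
  by_contra h0
  have hclosed : IsClosed (convexHull ℝ (g '' {i | i ∈ t ∧ f i x₀ = F})) :=
    (((t.finite_toSet.subset fun _ hi => hi.1).image g).isCompact_convexHull ℝ).isClosed
  obtain ⟨φ, u, hu, hφ⟩ := geometric_hahn_banach_point_closed (convex_convexHull ℝ _) hclosed h0
  set d := -(InnerProductSpace.toDual ℝ X).symm φ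
  have hd : ∀ i ∈ t, f i x₀ = F → ⟪d, g i⟫ < 0 := fun i hi hact => by
    have := hφ (g i) (subset_convexHull ℝ _ ⟨i, ⟨hi, hact⟩, rfl⟩)
    rw [map_zero] at hu
    simp only [d, inner_neg_left, InnerProductSpace.toDual_symm_apply]
    linarith
  have hdescent : ∀ᶠ τ in 𝓝[>] (0 : ℝ), ∀ i ∈ t, f i (x₀ + τ • d) < F := by
    refine (eventually_all_finset t).2 fun i hi => ?_
    have hexp : ∀ τ : ℝ, f i (x₀ + τ • d) = f i x₀ + τ * (⟪d, g i⟫ + τ * ‖d‖ ^ 2) := fun τ => by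
      rw [hf, real_inner_smul_left, norm_smul, mul_pow, Real.norm_eq_abs, sq_abs]
      ring
    simp only [hexp]
    rcases (t.le_sup' (f · x₀) hi).lt_or_eq with hlt | hact
    · have hcont : Continuous fun τ : ℝ => f i x₀ + τ * (⟪d, g i⟫ + τ * ‖d‖ ^ 2) := by
        fun_prop
      exact ((hcont.tendsto 0).mono_left nhdsWithin_le_nhds).eventually_lt_const
        (by simpa using hlt)
    · have hcont : Continuous fun τ : ℝ => ⟪d, g i⟫ + τ * ‖d‖ ^ 2 := by fun_prop
      have hneg : ∀ᶠ τ in 𝓝[>] (0 : ℝ), ⟪d, g i⟫ + τ * ‖d‖ ^ 2 < 0 :=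
        ((hcont.tendsto 0).mono_left nhdsWithin_le_nhds).eventually_lt_const
          (by simpa using hd i hi hact)
      filter_upwards [self_mem_nhdsWithin, hneg] with τ hτ hτneg
      rw [hact]
      linarith [mul_neg_of_pos_of_neg (mem_Ioi.1 hτ) hτneg]
  obtain ⟨τ, hτ⟩ := hdescent.exists
  exact (hmin (x₀ + τ • d)).not_gt ((Finset.sup'_lt_iff ht).2 hτ)

/-- The finite Minty lemma: at a minimiser of the maximum of these quadratics the active
gradients average to `0`, and monotonicity makes the average of the active values nonpositive. -/
theorem exists_forall_inner_sub_sub_add_nonpos {ι : Type*} {t : Finset ι} (ht : t.Nonempty)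
    {a u : ι → X} (hmono : ∀ i ∈ t, ∀ j ∈ t, 0 ≤ ⟪a i - a j, u i - u j⟫) (z : X) :
    ∃ x, ∀ i ∈ t, ⟪x - a i, x - z + u i⟫ ≤ 0 := by
  set f : ι → X → ℝ := fun i x => ⟪x - a i, x - z + u i⟫
  obtain ⟨i₀, hi₀⟩ := id ht
  have hcont : Continuous fun x => t.sup' ht (f · x) :=
    Continuous.finset_sup'_apply ht fun i _ => by fun_prop
  have hcoer : Tendsto (fun x => t.sup' ht (f · x)) (cocompact X) atTop := by
    refine tendsto_atTop_mono (fun x => t.le_sup' (f · x) hi₀) ?_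
    have hrw : ∀ x, x - z + u i₀ = x - (z - u i₀) := fun x => by abel
    simpa only [f, hrw] using tendsto_inner_sub_sub_cocompact (a i₀) (z - u i₀)
  obtain ⟨x₀, hx₀⟩ := hcont.exists_forall_le hcoer
  set g : ι → X := fun i => (2 : ℝ) • x₀ - z + u i - a i
  have hf : ∀ i h, f i (x₀ + h) = f i x₀ + ⟪h, g i⟫ + ‖h‖ ^ 2 := fun i h => by
    simp only [f, g, inner_sub_left, inner_sub_right, inner_add_left, inner_add_right,
      real_inner_smul_right, real_inner_self_eq_norm_sq, norm_add_sq_real, real_inner_comm h]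
    ring
  have h0 := zero_mem_convexHull_gradients_of_sup'_le ht hf hx₀
  rw [convexHull_eq] at h0
  obtain ⟨κ, s, w, y, hw₀, hw₁, hy, hsum⟩ := h0
  have : Nonempty ι := ⟨i₀⟩
  choose! q hq hqy using hy
  refine ⟨x₀, fun i hi => (t.le_sup' (f · x₀) hi).trans ?_⟩
  have hsup : t.sup' ht (f · x₀) = ∑ k ∈ s, w k * f (q k) x₀ := by
    rw [Finset.sum_congr rfl fun k hk => by rw [(hq k hk).2], ← Finset.sum_mul, hw₁, one_mul]
  rw [hsup]
  refine sum_mul_inner_nonpos_of_sum_smul_eq_zero s hw₀ hw₁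
    (fun k hk l hl => hmono _ (hq k hk).1 _ (hq l hl).1) ?_
  rw [Finset.centerMass_eq_of_sum_1 _ _ hw₁] at hsum
  rw [← hsum]
  exact Finset.sum_congr rfl fun k hk => by rw [← hqy k hk]

end FiniteMonotone

theorem svDom_inverse {X : Type*} (A : X → Set X) : svDom (fun u => {x | u ∈ A x}) = svRan A := by
  ext u
  simp [svDom, svRan, Set.Nonempty]

section MaximalMonotone

variable {X : Type*} [NormedAddCommGroup X] [InnerProductSpace ℝ X] {A : X → Set X}

namespace IsMaxMonotoneOp

theorem exists_mem (hA : IsMaxMonotoneOp A) : ∃ x u, u ∈ A x := by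
  by_contra! h
  exact h 0 0 (hA.2 0 0 fun y v hv => absurd hv (h y v))

theorem inverse (hA : IsMaxMonotoneOp A) : IsMaxMonotoneOp fun u => {x | u ∈ A x} := by
  refine ⟨fun u x v y hx hy => ?_, fun u x h => hA.2 x u fun y v hv => ?_⟩
  · rw [real_inner_comm]
    exact hA.1 hx hy
  · rw [real_inner_comm]
    exact h v y hv

theorem smul (hA : IsMaxMonotoneOp A) {ε : ℝ} (hε : 0 < ε) :
    IsMaxMonotoneOp fun x => ε • A x := by
  refine ⟨?_, fun x u h => ?_⟩
  · rintro x _ y _ ⟨u, hu, rfl⟩ ⟨v, hv, rfl⟩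
    rw [← smul_sub, real_inner_smul_right]
    exact mul_nonneg hε.le (hA.1 hu hv)
  · have hu : ε⁻¹ • u ∈ A x := hA.2 x _ fun y v hv => by
      have hyv := h y (ε • v) (smul_mem_smul_set hv)
      rw [show u - ε • v = ε • (ε⁻¹ • u - v) by rw [smul_sub, smul_inv_smul₀ hε.ne'],
        real_inner_smul_right] at hyv
      exact nonneg_of_mul_nonneg_right (by linarith) hε
    simpa [smul_inv_smul₀ hε.ne'] using smul_mem_smul_set (a := ε) hu

variable [FiniteDimensional ℝ X]

/-- Minty's theorem. The compact sets `{x | ⟪x - a, x - z + u⟫ ≤ 0}`, `u ∈ A a`, have the finite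
intersection property by the finite lemma, and a common point `x` has `z - x ∈ A x` by
maximality. -/
theorem exists_add_eq (hA : IsMaxMonotoneOp A) (z : X) : ∃ x u, u ∈ A x ∧ x + u = z := by
  obtain ⟨x₀, u₀, hu₀⟩ := hA.exists_mem
  let G := {p : X × X // p.2 ∈ A p.1}
  let S : G → Set X := fun p => {x | ⟪x - p.1.1, x - z + p.1.2⟫ ≤ 0}
  have hclosed : ∀ p, IsClosed (S p) := fun p => isClosed_le (by fun_prop) continuous_const
  have hbounded : Bornology.IsBounded (S ⟨(x₀, u₀), hu₀⟩) := by
    refine Metric.isBounded_closedBall (x := x₀) (r := ‖x₀ - (z - u₀)‖).subset fun x hx => ?_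
    have hlow := dist_mul_dist_sub_norm_le_inner x x₀ (z - u₀)
    rw [show x - (z - u₀) = x - z + u₀ by abel] at hlow
    have : ⟪x - x₀, x - z + u₀⟫ ≤ 0 := hx
    refine Metric.mem_closedBall.2 (not_lt.1 fun hlt => ?_)
    nlinarith [mul_pos ((norm_nonneg _).trans_lt hlt) (sub_pos.2 hlt)]
  have hfip : ∀ F : Finset G, (S ⟨(x₀, u₀), hu₀⟩ ∩ ⋂ p ∈ F, S p).Nonempty := fun F => by
    classical
    obtain ⟨x, hx⟩ := exists_forall_inner_sub_sub_add_nonpos (Finset.insert_nonempty _ F)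
      (a := fun p : G => p.1.1) (u := fun p => p.1.2) (fun p _ q _ => hA.1 p.2 q.2) z
    exact ⟨x, hx _ (F.mem_insert_self _),
      mem_iInter₂.2 fun p hp => hx p (Finset.mem_insert_of_mem hp)⟩
  obtain ⟨x, -, hx⟩ := (Metric.isCompact_of_isClosed_isBounded (hclosed _) hbounded
    ).inter_iInter_nonempty S hclosed hfip
  refine ⟨x, z - x, hA.2 x (z - x) fun y v hv => ?_, add_sub_cancel x z⟩
  have hxyv : ⟪x - y, x - z + v⟫ ≤ 0 := mem_iInter.1 hx ⟨(y, v), hv⟩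
  rw [show z - x - v = -(x - z + v) by abel, inner_neg_right]
  linarith

theorem exists_add_smul_eq (hA : IsMaxMonotoneOp A) {ε : ℝ} (hε : 0 < ε) (z : X) :
    ∃ x v, v ∈ A x ∧ x + ε • v = z := by
  obtain ⟨x, _, ⟨v, hv, rfl⟩, hxv⟩ := (hA.smul hε).exists_add_eq z
  exact ⟨x, v, hv, hxv⟩

end IsMaxMonotoneOp

end MaximalMonotone

theorem le_add_sqrt_of_sq_le_add_mul {r a b : ℝ} (ha : 0 ≤ a) (hb : 0 ≤ b)
    (h : r ^ 2 ≤ a + b * r) : r ≤ b + √a := by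
  by_contra! hlt
  nlinarith [Real.sq_sqrt ha, Real.sqrt_nonneg a]

section Rockafellar

variable {X : Type*} [NormedAddCommGroup X] [InnerProductSpace ℝ X] {A : X → Set X}

theorem exists_inner_gt_of_mem_intrinsicInterior {s : Set X} {z q : X}
    (hz : z ∈ intrinsicInterior ℝ s) (hq : q ∈ (affineSpan ℝ s).direction) (hq0 : q ≠ 0) :
    ∃ y ∈ s, ⟪z, q⟫ < ⟪y, q⟫ := by
  obtain ⟨hzs, ε, hε, hball⟩ := mem_intrinsicInterior_iff_dist.1 hz
  have hc : 0 < ε / (2 * ‖q‖) := by positivity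
  refine ⟨(ε / (2 * ‖q‖)) • q + z, hball _ ?_ ?_, ?_⟩
  · exact AffineSubspace.vadd_mem_of_mem_direction (Submodule.smul_mem _ _ hq)
      (subset_affineSpan ℝ s hzs)
  · have hqn : ‖q‖ ≠ 0 := norm_ne_zero_iff.2 hq0
    rw [dist_eq_norm, add_sub_cancel_right, norm_smul, Real.norm_of_nonneg hc.le,
      show ε / (2 * ‖q‖) * ‖q‖ = ε / 2 by field_simp]
    linarith
  · rw [inner_add_left, real_inner_smul_left, real_inner_self_eq_norm_sq]
    have : 0 < ‖q‖ ^ 2 := by positivity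
    nlinarith

theorem IsMonotoneOp.exists_inner_lower_bound (hA : IsMonotoneOp A) {z : X}
    (hz : z ∈ convexHull ℝ (svDom A)) :
    ∃ M₁ M₂ : ℝ, 0 ≤ M₁ ∧ 0 ≤ M₂ ∧ ∀ x v, v ∈ A x → -(M₁ + M₂ * ‖x - z‖) ≤ ⟪x - z, v⟫ := by
  rw [convexHull_eq] at hz
  obtain ⟨ι, t, w, y, hw₀, hw₁, hy, hyz⟩ := hz
  choose! u hu using hy
  rw [Finset.centerMass_eq_of_sum_1 _ _ hw₁] at hyz
  refine ⟨∑ i ∈ t, w i * (‖z - y i‖ * ‖u i‖), ∑ i ∈ t, w i * ‖u i‖,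
    Finset.sum_nonneg fun i hi => by have := hw₀ i hi; positivity,
    Finset.sum_nonneg fun i hi => by have := hw₀ i hi; positivity, fun x v hv => ?_⟩
  have hxz : ∑ i ∈ t, w i • (x - y i) = x - z := by
    simp only [smul_sub, Finset.sum_sub_distrib, ← Finset.sum_smul, hw₁, one_smul, hyz]
  calc -(∑ i ∈ t, w i * (‖z - y i‖ * ‖u i‖) + (∑ i ∈ t, w i * ‖u i‖) * ‖x - z‖)
      = ∑ i ∈ t, w i * -((‖x - z‖ + ‖z - y i‖) * ‖u i‖) := by
        rw [Finset.sum_mul, ← Finset.sum_add_distrib, ← Finset.sum_neg_distrib]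
        exact Finset.sum_congr rfl fun i _ => by ring
    _ ≤ ∑ i ∈ t, w i * ⟪x - y i, u i⟫ := Finset.sum_le_sum fun i hi => by
        refine mul_le_mul_of_nonneg_left ?_ (hw₀ i hi)
        have := norm_sub_le_norm_sub_add_norm_sub x z (y i)
        nlinarith [neg_abs_le ⟪x - y i, u i⟫, abs_real_inner_le_norm (x - y i) (u i),
          norm_nonneg (u i)]
    _ ≤ ∑ i ∈ t, w i * ⟪x - y i, v⟫ := Finset.sum_le_sum fun i hi => by
        refine mul_le_mul_of_nonneg_left ?_ (hw₀ i hi)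
        have := hA hv (hu i hi)
        rw [inner_sub_right] at this
        linarith
    _ = ⟪x - z, v⟫ := by
        simp only [← real_inner_smul_left, ← sum_inner, hxz]

theorem IsMonotoneOp.tendsto_of_add_smul_eq (hA : IsMonotoneOp A) {z : X}
    (hz : z ∈ convexHull ℝ (svDom A)) {α : Type*} {l : Filter α} {x v : α → X} {ε : α → ℝ}
    (hε : ∀ n, 0 < ε n) (hε₀ : Tendsto ε l (𝓝 0)) (hv : ∀ n, v n ∈ A (x n))
    (hxv : ∀ n, x n + ε n • v n = z) : Tendsto x l (𝓝 z) := by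
  obtain ⟨M₁, M₂, hM₁, hM₂, hM⟩ := hA.exists_inner_lower_bound hz
  have hbound : ∀ n, ‖x n - z‖ ≤ ε n * M₂ + √(ε n * M₁) := fun n => by
    have hεv : ε n * ⟪x n - z, v n⟫ = -‖x n - z‖ ^ 2 := by
      rw [← real_inner_smul_right, show ε n • v n = -(x n - z) by rw [← hxv n]; abel,
        inner_neg_right, real_inner_self_eq_norm_sq]
    refine le_add_sqrt_of_sq_le_add_mul (mul_nonneg (hε n).le hM₁)
      (mul_nonneg (hε n).le hM₂) ?_
    nlinarith [mul_le_mul_of_nonneg_left (hM (x n) (v n) (hv n)) (hε n).le]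
  have hlim : Tendsto (fun n => ε n * M₂ + √(ε n * M₁)) l (𝓝 0) := by
    simpa using (hε₀.mul_const M₂).add (hε₀.mul_const M₁).sqrt
  exact tendsto_iff_norm_sub_tendsto_zero.2
    (squeeze_zero (fun n => norm_nonneg _) hbound hlim)

variable [FiniteDimensional ℝ X]

/-- Normalise `p n` to `(1 + ‖p n‖)⁻¹ • p n` and pass to a convergent subsequence; `τ = 0`
exactly when `p n` is unbounded along it. -/
theorem exists_limit_of_forall_inner_nonneg {V : Submodule ℝ X} {x p : ℕ → X} {z : X}
    (hx : Tendsto x atTop (𝓝 z)) (hpV : ∀ n, p n ∈ V)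
    (hp : ∀ n y w, w ∈ A y → 0 ≤ ⟪x n - y, p n - w⟫) :
    ∃ q ∈ V, ∃ τ ∈ Icc (0 : ℝ) 1, ‖q‖ = 1 - τ ∧ ∀ y w, w ∈ A y → 0 ≤ ⟪z - y, q - τ • w⟫ := by
  set t : ℕ → ℝ := fun n => (1 + ‖p n‖)⁻¹
  have ht : ∀ n, 0 < t n := fun n => by positivity
  have hnorm : ∀ n, ‖t n • p n‖ = 1 - t n := fun n => by
    rw [norm_smul, Real.norm_of_nonneg (ht n).le]
    simp only [t]
    field_simp
    ring
  have hmem : ∀ n, (t n • p n, t n) ∈ Metric.closedBall (0 : X) 1 ×ˢ Icc (0 : ℝ) 1 := fun n =>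
    ⟨by simp [hnorm n, (ht n).le], (ht n).le, by linarith [norm_nonneg (t n • p n), hnorm n]⟩
  obtain ⟨⟨q, τ⟩, ⟨-, hτ⟩, φ, hφ, hlim⟩ :=
    ((isCompact_closedBall (0 : X) 1).prod isCompact_Icc).tendsto_subseq hmem
  have hq : Tendsto (fun k => t (φ k) • p (φ k)) atTop (𝓝 q) := (continuous_fst.tendsto _).comp hlim
  have hτ' : Tendsto (fun k => t (φ k)) atTop (𝓝 τ) := (continuous_snd.tendsto _).comp hlim
  have hxφ := hx.comp hφ.tendsto_atTop
  refine ⟨q, V.closed_of_finiteDimensional.mem_of_tendsto hq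
    (Eventually.of_forall fun k => V.smul_mem _ (hpV _)), τ, hτ, ?_, fun y w hw => ?_⟩
  · refine tendsto_nhds_unique hq.norm ?_
    simpa only [hnorm] using tendsto_const_nhds.sub hτ'
  · refine ge_of_tendsto ((hxφ.sub_const y).inner (hq.sub (hτ'.smul_const w)))
      (Eventually.of_forall fun k => ?_)
    rw [← smul_sub, real_inner_smul_right]
    exact mul_nonneg (ht _).le (hp _ y w hw)

/-- Along the resolvent path `x n + (n + 1)⁻¹ • v n = z` we get `x n → z`. The limit of the
normalised components of `v n` along the direction of `aff (dom A)` is either a multiple of an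
element of `A z` or a nonzero normal to `dom A` at `z`, impossible at a relative interior point. -/
theorem IsMaxMonotoneOp.intrinsicInterior_convexHull_svDom_subset (hA : IsMaxMonotoneOp A) :
    intrinsicInterior ℝ (convexHull ℝ (svDom A)) ⊆ svDom A := by
  intro z hz
  choose x v hv hxv using fun n : ℕ => hA.exists_add_smul_eq (Nat.one_div_pos_of_nat (α := ℝ)) z
  have hxz := hA.1.tendsto_of_add_smul_eq (intrinsicInterior_subset hz)
    (fun n => Nat.one_div_pos_of_nat) tendsto_one_div_add_atTop_nhds_zero_nat hv hxv
  set V := (affineSpan ℝ (convexHull ℝ (svDom A))).direction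
  have hdir : ∀ {a b}, a ∈ svDom A → b ∈ svDom A → a - b ∈ V := fun ha hb =>
    AffineSubspace.vsub_mem_direction (subset_affineSpan ℝ _ (subset_convexHull ℝ _ ha))
      (subset_affineSpan ℝ _ (subset_convexHull ℝ _ hb))
  -- points of `dom A` only see the component of `v n` along `V`
  have hproj : ∀ n y w, w ∈ A y → 0 ≤ ⟪x n - y, V.starProjection (v n) - w⟫ := fun n y w hw => by
    have h0 := V.inner_right_of_mem_orthogonal (hdir ⟨_, hv n⟩ ⟨w, hw⟩)
      (V.sub_starProjection_mem_orthogonal (v n))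
    have := hA.1 (hv n) hw
    rw [inner_sub_right] at h0 this ⊢
    linarith
  obtain ⟨q, hqV, τ, hτ, hq, hlim⟩ := exists_limit_of_forall_inner_nonneg hxz
    (fun n => V.starProjection_apply_mem (v n)) hproj
  rcases hτ.1.eq_or_lt with rfl | hτ0
  · have hq0 : q ≠ 0 := by
      rintro rfl
      norm_num at hq
    obtain ⟨y, hy, hyq⟩ := exists_inner_gt_of_mem_intrinsicInterior hz hqV hq0
    have hhalf : convexHull ℝ (svDom A) ⊆ {y | ⟪y, q⟫ ≤ ⟪z, q⟫} := by
      refine convexHull_min (fun y ⟨w, hw⟩ => ?_) (convex_halfSpace_le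
        ⟨fun a b => inner_add_left a b q, fun c a => real_inner_smul_left a q c⟩ _)
      have := hlim y w hw
      rw [zero_smul, sub_zero, inner_sub_left] at this
      exact sub_nonneg.1 this
    exact absurd (hhalf hy) (not_le.2 hyq)
  · refine ⟨τ⁻¹ • q, hA.2 z _ fun y w hw => ?_⟩
    have hqw : τ⁻¹ • q - w = τ⁻¹ • (q - τ • w) := by
      rw [smul_sub, smul_smul, inv_mul_cancel₀ hτ0.ne', one_smul]
    rw [hqw, real_inner_smul_right]
    exact mul_nonneg (inv_nonneg.2 hτ0.le) (hlim y w hw)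

end Rockafellar

namespace IsMaxMonotoneOp

variable {X : Type*} [NormedAddCommGroup X] [InnerProductSpace ℝ X] [FiniteDimensional ℝ X]
  {A B : X → Set X}

theorem isNearlyConvex_svDom (hA : IsMaxMonotoneOp A) : IsNearlyConvex (svDom A) :=
  ⟨_, (convex_convexHull ℝ _).intrinsicInterior, hA.intrinsicInterior_convexHull_svDom_subset,
    (subset_convexHull ℝ _).trans (convex_convexHull ℝ _).subset_closure_intrinsicInterior⟩

theorem isNearlyConvex_svRan (hA : IsMaxMonotoneOp A) : IsNearlyConvex (svRan A) :=
  svDom_inverse A ▸ hA.inverse.isNearlyConvex_svDom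

theorem svDom_sub_svDom_sub_svRan_add_svRan_eq_univ (hA : IsMaxMonotoneOp A)
    (hB : IsMaxMonotoneOp B) : svDom A - svDom B - (svRan A + svRan B) = univ := by
  refine eq_univ_of_forall fun x => ?_
  obtain ⟨a, u, hu⟩ := hA.exists_mem
  obtain ⟨b, v, hv, hbv⟩ := hB.exists_add_eq (a - u - x)
  refine ⟨a - b, sub_mem_sub ⟨u, hu⟩ ⟨v, hv⟩, u + v,
    add_mem_add (mem_iUnion_of_mem a hu) (mem_iUnion_of_mem b hv), ?_⟩
  simp only
  rw [show a - b - (u + v) = a - u - (b + v) by abel, hbv]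
  abel

end IsMaxMonotoneOp

/-- For maximally monotone `A, B` on a finite-dimensional real inner product space,
`ri (dom A - dom B) ∩ ri (ran A + ran B) ≠ ∅`. -/
theorem ri_D_inter_ri_R_nonempty {X : Type*} [NormedAddCommGroup X] [InnerProductSpace ℝ X]
    [FiniteDimensional ℝ X] (A B : X → Set X)
    (hA : IsMaxMonotoneOp A) (hB : IsMaxMonotoneOp B) :
    (intrinsicInterior ℝ (svDom A - svDom B) ∩
      intrinsicInterior ℝ (svRan A + svRan B)).Nonempty :=
  IsNearlyConvex.inter_intrinsicInterior_nonempty_of_sub_eq_univ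
    (hA.isNearlyConvex_svDom.sub hB.isNearlyConvex_svDom)
    (hA.isNearlyConvex_svRan.add hB.isNearlyConvex_svRan)
    (hA.svDom_sub_svDom_sub_svRan_add_svRan_eq_univ hB)
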